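/- Under the setup of the proof of the main theorem (R a maximum rainbow matching of size n−1 missing Fₙ, X and Y the uncovered vertex sets), if Fᵢ ∈ F′ (i.e., the U-endpoint of rᵢ is an endpoint of an edge of Fₙ going to Y) and |Fᵢ| ≥ ⌈3n/2⌉ + 1, then Fᵢ has at least ⌈n/2⌉ + 1 edges in E(X, W ∖ Y) and at least ⌈n/2⌉ + 1 edges in E(Y, U ∖ X). -/
import Mathlib

set_option maxHeartbeats 1000000


/-- Two edges of a bipartite graph (encoded as pairs side-U × side-W) are vertex-disjoint. -/
def EdgeDisj {α β : Type*} (e f : α × β) : Prop := e.1 ≠ f.1 ∧ e.2 ≠ f.2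

/-- A finite set of bipartite edges is a matching: distinct edges are vertex-disjoint. -/
def IsMatching {α β : Type*} (M : Finset (α × β)) : Prop :=
  ∀ e ∈ M, ∀ f ∈ M, e ≠ f → EdgeDisj e f

/-- `S, g` is a (partial) rainbow matching for the family `F`:
for each index `i ∈ S` an edge `g i ∈ F i`, pairwise vertex-disjoint. -/
def IsRainbow {α β : Type*} {n : ℕ} (F : Fin n → Finset (α × β))
    (S : Finset (Fin n)) (g : Fin n → α × β) : Prop :=
  (∀ i ∈ S, g i ∈ F i) ∧ ∀ i ∈ S, ∀ j ∈ S, i ≠ j → EdgeDisj (g i) (g j)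

lemma EdgeDisj.symm' {α β : Type*} {e f : α × β} (h : EdgeDisj e f) : EdgeDisj f e :=
  ⟨h.1.symm, h.2.symm⟩

theorem stmt7 {α β : Type*} (n : ℕ) (hn : 1 < n) (F : Fin n → Finset (α × β))
    (hmatch : ∀ i, IsMatching (F i))
    (S : Finset (Fin n)) (g : Fin n → α × β)
    (hR : IsRainbow F S g) (hcard : S.card = n - 1)
    (hlast : (⟨n - 1, by omega⟩ : Fin n) ∉ S)
    (hmax : ∀ (S' : Finset (Fin n)) (g' : Fin n → α × β),
      IsRainbow F S' g' → S'.card ≤ S.card)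
    (i : Fin n) (hi : i ∈ S)
    -- Fᵢ ∈ F′: an edge of Fₙ joins the U-endpoint of rᵢ = g i to a vertex of Y
    (hF' : ∃ e ∈ F ⟨n - 1, by omega⟩, e.1 = (g i).1 ∧ ∀ j ∈ S, (g j).2 ≠ e.2)
    (hcardFi : (3 * n + 1) / 2 + 1 ≤ (F i).card) :
    -- at least ⌈n/2⌉+1 edges of Fᵢ in E(X, W∖Y) and at least ⌈n/2⌉+1 in E(Y, U∖X)
    (n + 1) / 2 + 1 ≤
      {e ∈ (↑(F i) : Set (α × β)) |
        (∀ j ∈ S, (g j).1 ≠ e.1) ∧ (∃ j ∈ S, (g j).2 = e.2)}.ncard ∧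
    (n + 1) / 2 + 1 ≤
      {e ∈ (↑(F i) : Set (α × β)) |
        (∀ j ∈ S, (g j).2 ≠ e.2) ∧ (∃ j ∈ S, (g j).1 = e.1)}.ncard := by
  classical
  set N : Fin n := ⟨n - 1, by omega⟩ with hN
  obtain ⟨hgmem, hgdisj⟩ := hR
  obtain ⟨f, hfmem, hf1, hf2⟩ := hF'
  have hiN : i ≠ N := fun h => hlast (h ▸ hi)
  -- Claim: at most one edge of F i has both endpoints uncovered by R
  have hA : ((F i).filter
      (fun e => (∀ j ∈ S, (g j).1 ≠ e.1) ∧ (∀ j ∈ S, (g j).2 ≠ e.2))).card ≤ 1 := by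
    rw [Finset.card_le_one]
    intro a ha b hb
    by_contra hab
    simp only [Finset.mem_filter] at ha hb
    obtain ⟨haM, ha1, ha2⟩ := ha
    obtain ⟨hbM, hb1, hb2⟩ := hb
    have hab2 : a.2 ≠ b.2 := (hmatch i a haM b hbM hab).2
    obtain ⟨e, heM, he1, he2, hef⟩ :
        ∃ e ∈ F i, (∀ j ∈ S, (g j).1 ≠ e.1) ∧ (∀ j ∈ S, (g j).2 ≠ e.2) ∧ e.2 ≠ f.2 := by
      by_cases h : a.2 = f.2
      · exact ⟨b, hbM, hb1, hb2, fun hh => hab2 (h ▸ hh ▸ rfl)⟩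
      · exact ⟨a, haM, ha1, ha2, h⟩
    set g' : Fin n → α × β := fun j => if j = i then e else if j = N then f else g j with hg'
    have hg'i : g' i = e := by simp [hg']
    have hg'N : g' N = f := by simp [hg', hiN.symm]
    have hg'other : ∀ j ∈ S, j ≠ i → g' j = g j := by
      intro j hj hji
      have hjN : j ≠ N := fun h => hlast (h ▸ hj)
      simp [hg', hji, hjN]
    -- disjointness facts
    have hef' : EdgeDisj e f := by
      refine ⟨?_, hef⟩
      rw [hf1]; exact (he1 i hi).symm
    have heg : ∀ j ∈ S, EdgeDisj e (g j) := fun j hj => ⟨(he1 j hj).symm, (he2 j hj).symm⟩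
    have hfg : ∀ j ∈ S, j ≠ i → EdgeDisj f (g j) := by
      intro j hj hji
      constructor
      · rw [hf1]; exact (hgdisj i hi j hj (fun h => hji h.symm)).1
      · exact (hf2 j hj).symm
    have hrb : IsRainbow F (insert N S) g' := by
      constructor
      · intro j hj
        rcases Finset.mem_insert.mp hj with h | h
        · rw [h, hg'N]; exact hfmem
        · by_cases hji : j = i
          · rw [hji, hg'i]; exact hji ▸ heM
          · rw [hg'other j h hji]; exact hgmem j h
      · intro j hj k hk hjk
        have key : ∀ x ∈ insert N S, ∀ y ∈ insert N S, x ≠ y →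
            (x = i ∨ (x = N ∧ y ≠ i)) → EdgeDisj (g' x) (g' y) := by
          intro x hx y hy hxy hcase
          rcases hcase with rfl | ⟨rfl, hyi⟩
          · rw [hg'i]
            rcases Finset.mem_insert.mp hy with h | h
            · rw [h, hg'N]; exact hef'
            · rw [hg'other y h (fun hh => hxy hh.symm)]
              exact heg y h
          · rw [hg'N]
            have hyS : y ∈ S := by
              rcases Finset.mem_insert.mp hy with h | h
              · exact (hxy h.symm).elim
              · exact h
            by_cases hyi2 : y = i
            · exact (hyi hyi2).elim
            · rw [hg'other y hyS hyi2]; exact hfg y hyS hyi2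
        by_cases hji : j = i
        · exact key j hj k hk hjk (Or.inl hji)
        · by_cases hki : k = i
          · exact (key k hk j hj hjk.symm (Or.inl hki)).symm'
          · by_cases hjN : j = N
            · exact key j hj k hk hjk (Or.inr ⟨hjN, hki⟩)
            · by_cases hkN : k = N
              · exact (key k hk j hj hjk.symm (Or.inr ⟨hkN, hji⟩)).symm'
              · have hjS : j ∈ S := by
                  rcases Finset.mem_insert.mp hj with h | h
                  · exact (hjN h).elim
                  · exact h
                have hkS : k ∈ S := by
                  rcases Finset.mem_insert.mp hk with h | h
                  · exact (hkN h).elim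
                  · exact h
                rw [hg'other j hjS hji, hg'other k hkS hki]
                exact hgdisj j hjS k hkS hjk
    have hcon := hmax (insert N S) g' hrb
    rw [Finset.card_insert_of_notMem hlast, hcard] at hcon
    omega
  -- Bound: edges with covered second coordinate
  have hsndinj : ∀ T : Finset (α × β), T ⊆ F i → Set.InjOn Prod.snd (↑T : Set (α × β)) := by
    intro T hT x hx y hy hxy
    by_contra h
    exact (hmatch i x (hT hx) y (hT hy) h).2 hxy
  have hfstinj : ∀ T : Finset (α × β), T ⊆ F i → Set.InjOn Prod.fst (↑T : Set (α × β)) := by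
    intro T hT x hx y hy hxy
    by_contra h
    exact (hmatch i x (hT hx) y (hT hy) h).1 hxy
  have hQ2 : ((F i).filter (fun e => ∃ j ∈ S, (g j).2 = e.2)).card ≤ S.card := by
    set T := (F i).filter (fun e => ∃ j ∈ S, (g j).2 = e.2) with hT
    have h1 : T.card = (T.image Prod.snd).card :=
      (Finset.card_image_of_injOn (hsndinj T (Finset.filter_subset _ _))).symm
    have h2 : T.image Prod.snd ⊆ S.image (fun j => (g j).2) := by
      intro x hx
      simp only [Finset.mem_image] at hx ⊢
      obtain ⟨e, he, rfl⟩ := hx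
      obtain ⟨j, hj, hje⟩ := (Finset.mem_filter.mp he).2
      exact ⟨j, hj, hje⟩
    calc T.card = _ := h1
      _ ≤ (S.image (fun j => (g j).2)).card := Finset.card_le_card h2
      _ ≤ S.card := Finset.card_image_le
  have hQ1 : ((F i).filter (fun e => ∃ j ∈ S, (g j).1 = e.1)).card ≤ S.card := by
    set T := (F i).filter (fun e => ∃ j ∈ S, (g j).1 = e.1) with hT
    have h1 : T.card = (T.image Prod.fst).card :=
      (Finset.card_image_of_injOn (hfstinj T (Finset.filter_subset _ _))).symm
    have h2 : T.image Prod.fst ⊆ S.image (fun j => (g j).1) := by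
      intro x hx
      simp only [Finset.mem_image] at hx ⊢
      obtain ⟨e, he, rfl⟩ := hx
      obtain ⟨j, hj, hje⟩ := (Finset.mem_filter.mp he).2
      exact ⟨j, hj, hje⟩
    calc T.card = _ := h1
      _ ≤ (S.image (fun j => (g j).1)).card := Finset.card_le_card h2
      _ ≤ S.card := Finset.card_image_le
  -- partitions
  have hsplit2 : ((F i).filter (fun e => ∃ j ∈ S, (g j).2 = e.2)).card
      + ((F i).filter (fun e => ¬ ∃ j ∈ S, (g j).2 = e.2)).card = (F i).card :=
    Finset.card_filter_add_card_filter_not _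
  have hsplit1 : ((F i).filter (fun e => ∃ j ∈ S, (g j).1 = e.1)).card
      + ((F i).filter (fun e => ¬ ∃ j ∈ S, (g j).1 = e.1)).card = (F i).card :=
    Finset.card_filter_add_card_filter_not _
  -- split the "uncovered second" part by first coordinate
  have hsplit2' : (((F i).filter (fun e => ¬ ∃ j ∈ S, (g j).2 = e.2)).filter
        (fun e => ∃ j ∈ S, (g j).1 = e.1)).card
      + (((F i).filter (fun e => ¬ ∃ j ∈ S, (g j).2 = e.2)).filter
        (fun e => ¬ ∃ j ∈ S, (g j).1 = e.1)).card
      = ((F i).filter (fun e => ¬ ∃ j ∈ S, (g j).2 = e.2)).card :=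
    Finset.card_filter_add_card_filter_not _
  have hsplit1' : (((F i).filter (fun e => ¬ ∃ j ∈ S, (g j).1 = e.1)).filter
        (fun e => ∃ j ∈ S, (g j).2 = e.2)).card
      + (((F i).filter (fun e => ¬ ∃ j ∈ S, (g j).1 = e.1)).filter
        (fun e => ¬ ∃ j ∈ S, (g j).2 = e.2)).card
      = ((F i).filter (fun e => ¬ ∃ j ∈ S, (g j).1 = e.1)).card :=
    Finset.card_filter_add_card_filter_not _
  -- identify the A-set in both splits
  have heqA1 : (((F i).filter (fun e => ¬ ∃ j ∈ S, (g j).2 = e.2)).filter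
        (fun e => ¬ ∃ j ∈ S, (g j).1 = e.1))
      = (F i).filter
        (fun e => (∀ j ∈ S, (g j).1 ≠ e.1) ∧ (∀ j ∈ S, (g j).2 ≠ e.2)) := by
    rw [Finset.filter_filter]
    apply Finset.filter_congr
    intro e _
    push_neg
    constructor
    · rintro ⟨h2, h1⟩; exact ⟨h1, h2⟩
    · rintro ⟨h1, h2⟩; exact ⟨h2, h1⟩
  have heqA2 : (((F i).filter (fun e => ¬ ∃ j ∈ S, (g j).1 = e.1)).filter
        (fun e => ¬ ∃ j ∈ S, (g j).2 = e.2))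
      = (F i).filter
        (fun e => (∀ j ∈ S, (g j).1 ≠ e.1) ∧ (∀ j ∈ S, (g j).2 ≠ e.2)) := by
    rw [Finset.filter_filter]
    apply Finset.filter_congr
    intro e _
    push_neg
    exact Iff.rfl
  -- identify the two target sets with filters
  have htgt1 : {e ∈ (↑(F i) : Set (α × β)) |
        (∀ j ∈ S, (g j).1 ≠ e.1) ∧ (∃ j ∈ S, (g j).2 = e.2)}.ncard
      = (((F i).filter (fun e => ¬ ∃ j ∈ S, (g j).1 = e.1)).filter
        (fun e => ∃ j ∈ S, (g j).2 = e.2)).card := by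
    rw [Finset.filter_filter]
    rw [← Set.ncard_coe_finset]
    congr 1
    rw [Finset.coe_filter]
    ext e
    simp only [Set.mem_setOf_eq, Finset.mem_coe]
    constructor
    · rintro ⟨hm, h1, h2⟩; push_neg; exact ⟨hm, h1, h2⟩
    · rintro ⟨hm, h1, h2⟩
      push_neg at h1
      exact ⟨hm, h1, h2⟩
  have htgt2 : {e ∈ (↑(F i) : Set (α × β)) |
        (∀ j ∈ S, (g j).2 ≠ e.2) ∧ (∃ j ∈ S, (g j).1 = e.1)}.ncard
      = (((F i).filter (fun e => ¬ ∃ j ∈ S, (g j).2 = e.2)).filter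
        (fun e => ∃ j ∈ S, (g j).1 = e.1)).card := by
    rw [Finset.filter_filter]
    rw [← Set.ncard_coe_finset]
    congr 1
    rw [Finset.coe_filter]
    ext e
    simp only [Set.mem_setOf_eq, Finset.mem_coe]
    constructor
    · rintro ⟨hm, h1, h2⟩; push_neg; exact ⟨hm, h1, h2⟩
    · rintro ⟨hm, h1, h2⟩
      push_neg at h1
      exact ⟨hm, h1, h2⟩
  rw [htgt1, htgt2]
  rw [heqA1] at hsplit2'
  rw [heqA2] at hsplit1'
  rw [hcard] at hQ1 hQ2
  have arith : ∀ cB cC cA q1 q2 nq1 nq2 m : ℕ, cA ≤ 1 → q1 ≤ n - 1 → q2 ≤ n - 1 →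
      q1 + nq1 = m → q2 + nq2 = m → cC + cA = nq2 → cB + cA = nq1 →
      (3 * n + 1) / 2 + 1 ≤ m →
      ((n + 1) / 2 + 1 ≤ cB ∧ (n + 1) / 2 + 1 ≤ cC) := by
    intro cB cC cA q1 q2 nq1 nq2 m h1 h2 h3 h4 h5 h6 h7 h8
    omega
  exact arith _ _ _ _ _ _ _ _ hA hQ1 hQ2 hsplit1 hsplit2 hsplit2' hsplit1' hcardFi
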